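/- arXiv:2411.19476 — 3 statements merged into one kernel-verified Lean document; each statement's English description precedes it below -/
import Mathlib

section
/- Let G be obtained from finite simple graphs G_l and G_r (on disjoint vertex sets, with nonempty designated twin sets TS(G_l) and TS(G_r)) by the true twin operation G = G_l ⊗ G_r or by the attachment operation G = G_l ⊕ G_r, and assume G admits a paired-dominating set. If no minimum paired-dominating set of G belongs to D_0(G) (i.e. D_p(G) ∩ D_0(G) = ∅), then γ_p(G) = γ_0(G) + 2; otherwise γ_p(G) = γ_0(G). -/
/-- A finite simple graph on a subset of an ambient vertex type `α`,
together with a designated twin set `TS ⊆ verts`. -/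
structure TSGraph (α : Type*) where
  verts : Finset α
  Adj : α → α → Prop
  symm : ∀ u v, Adj u v → Adj v u
  irrefl : ∀ u, ¬ Adj u u
  adj_mem : ∀ u v, Adj u v → u ∈ verts ∧ v ∈ verts
  TS : Finset α
  TS_sub : TS ⊆ verts

namespace TSGraph

variable {α : Type*} [DecidableEq α]

/-- `f` encodes a perfect matching of the subgraph of `G` induced by `S`:
every vertex of `S` is paired with an adjacent vertex of `S`, involutively. -/
def IsPM (G : TSGraph α) (S : Finset α) (f : α → α) : Prop :=
  ∀ v ∈ S, f v ∈ S ∧ G.Adj v (f v) ∧ f (f v) = v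

/-- `S ⊆ V(G)` dominates `V(G) − TS(G)` and, for some `X ⊆ S ∩ TS(G)` of size `k`,
the subgraph induced by `S − X` has a perfect matching. -/
def Adm (G : TSGraph α) (k : ℕ) (S : Finset α) : Prop :=
  S ⊆ G.verts ∧
  (∀ v ∈ G.verts, v ∉ G.TS → v ∈ S ∨ ∃ u ∈ S, G.Adj u v) ∧
  ∃ X ⊆ S ∩ G.TS, X.card = k ∧ ∃ f, G.IsPM (S \ X) f

/-- Membership in the family `D_k(G)`: admissible of minimum cardinality. -/
def memD (G : TSGraph α) (k : ℕ) (S : Finset α) : Prop :=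
  G.Adm k S ∧ ∀ S', G.Adm k S' → S.card ≤ S'.card

/-- `D_k(G) ≠ ∅`. -/
def DkNonempty (G : TSGraph α) (k : ℕ) : Prop := ∃ S, G.memD k S

/-- `D_k(G) ≠ ∅` for all `0 ≤ k ≤ |TS(G)|`. -/
def AllDkNonempty (G : TSGraph α) : Prop := ∀ k ≤ G.TS.card, G.DkNonempty k

/-- `γ_k(G)`: the common cardinality of the members of `D_k(G)`. -/
noncomputable def gamma (G : TSGraph α) (k : ℕ) : ℕ :=
  sInf {n | ∃ S, G.Adm k S ∧ S.card = n}

/-- A paired-dominating set of `G`. -/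
def IsPDS (G : TSGraph α) (D : Finset α) : Prop :=
  D ⊆ G.verts ∧
  (∀ v ∈ G.verts, v ∈ D ∨ ∃ u ∈ D, G.Adj u v) ∧
  ∃ f, G.IsPM D f

/-- `γ_p(G)`: the paired-domination number. -/
noncomputable def gammaP (G : TSGraph α) : ℕ :=
  sInf {n | ∃ D, G.IsPDS D ∧ D.card = n}

/-- Membership in `D_p(G)`: minimum-cardinality paired-dominating sets. -/
def memDp (G : TSGraph α) (D : Finset α) : Prop :=
  G.IsPDS D ∧ D.card = G.gammaP

/-- `min(G) = min { γ_k(G) : 0 ≤ k ≤ |TS(G)| }`. -/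
noncomputable def minVal (G : TSGraph α) : ℕ :=
  sInf {n | ∃ k ≤ G.TS.card, G.gamma k = n}

/-- `α(G)`: the smallest `k` with `γ_k(G) = min(G)`. -/
noncomputable def alphaVal (G : TSGraph α) : ℕ :=
  sInf {k | k ≤ G.TS.card ∧ G.gamma k = G.minVal}

/-- `β(G)`: the largest `k` with `γ_k(G) = min(G)`. -/
noncomputable def betaVal (G : TSGraph α) : ℕ :=
  sSup {k | k ≤ G.TS.card ∧ G.gamma k = G.minVal}

/-- Membership in `Ψ(G)`: sets in some `D_k(G)` of cardinality `min(G)`. -/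
def memPsi (G : TSGraph α) (D : Finset α) : Prop :=
  (∃ k, k ≤ G.TS.card ∧ G.memD k D) ∧ D.card = G.minVal

/-- Equation (2) holds for `G`. -/
def Eq2Holds (G : TSGraph α) : Prop :=
  ∀ k ≤ G.TS.card,
    (k ≤ G.alphaVal → G.gamma k = G.minVal + G.alphaVal - k) ∧
    (G.betaVal ≤ k → G.gamma k = G.minVal + k - G.betaVal) ∧
    (G.alphaVal < k → k < G.betaVal → Even (k - G.alphaVal) → G.gamma k = G.minVal) ∧
    (G.alphaVal < k → k < G.betaVal → ¬ Even (k - G.alphaVal) → G.gamma k = G.minVal + 1)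

/-- `G = Gl ⊗ Gr` (true twin composition). -/
def IsTrueTwin (G Gl Gr : TSGraph α) : Prop :=
  Disjoint Gl.verts Gr.verts ∧
  G.verts = Gl.verts ∪ Gr.verts ∧
  (∀ u v, G.Adj u v ↔ Gl.Adj u v ∨ Gr.Adj u v ∨
    (u ∈ Gl.TS ∧ v ∈ Gr.TS) ∨ (u ∈ Gr.TS ∧ v ∈ Gl.TS)) ∧
  G.TS = Gl.TS ∪ Gr.TS

/-- `G = Gl ⊙ Gr` (false twin composition). -/
def IsFalseTwin (G Gl Gr : TSGraph α) : Prop :=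
  Disjoint Gl.verts Gr.verts ∧
  G.verts = Gl.verts ∪ Gr.verts ∧
  (∀ u v, G.Adj u v ↔ Gl.Adj u v ∨ Gr.Adj u v) ∧
  G.TS = Gl.TS ∪ Gr.TS

/-- `G = Gl ⊕ Gr` (attachment composition). -/
def IsAttach (G Gl Gr : TSGraph α) : Prop :=
  Disjoint Gl.verts Gr.verts ∧
  G.verts = Gl.verts ∪ Gr.verts ∧
  (∀ u v, G.Adj u v ↔ Gl.Adj u v ∨ Gr.Adj u v ∨
    (u ∈ Gl.TS ∧ v ∈ Gr.TS) ∨ (u ∈ Gr.TS ∧ v ∈ Gl.TS)) ∧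
  G.TS = Gl.TS

/-- The twin-set graph `G` arises from a decomposition tree all of whose associated
twin-set graphs satisfy the property `P`. -/
inductive FromDecompTree (P : TSGraph α → Prop) : TSGraph α → Prop where
  | single (G : TSGraph α) (v : α) (hv : G.verts = {v}) (hts : G.TS = {v})
      (hadj : ∀ u w, ¬ G.Adj u w) (hP : P G) : FromDecompTree P G
  | ttwin (G Gl Gr : TSGraph α) (hl : FromDecompTree P Gl) (hr : FromDecompTree P Gr)
      (h : IsTrueTwin G Gl Gr) (hP : P G) : FromDecompTree P G
  | ftwin (G Gl Gr : TSGraph α) (hl : FromDecompTree P Gl) (hr : FromDecompTree P Gr)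
      (h : IsFalseTwin G Gl Gr) (hP : P G) : FromDecompTree P G
  | attach (G Gl Gr : TSGraph α) (hl : FromDecompTree P Gl) (hr : FromDecompTree P Gr)
      (h : IsAttach G Gl Gr) (hP : P G) : FromDecompTree P G

end TSGraph

/-!
Every set carrying a perfect matching has even size, and a paired-dominating set is a member
of the family defining `γ_0`, so `γ_0(G) ≤ γ_p(G)` and both are even. Conversely, since every
vertex of `TS(G_l)` is adjacent to every vertex of `TS(G_r)` and `TS(G) ⊆ TS(G_l) ∪ TS(G_r)`,
a set in `D_0(G)` either already dominates the twin set or becomes paired-dominating after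
adding one adjacent pair `a ∈ TS(G_l)`, `b ∈ TS(G_r)`. Hence `γ_p(G) ∈ {γ_0(G), γ_0(G) + 2}`,
and `γ_p(G) = γ_0(G)` exactly when some minimum paired-dominating set lies in `D_0(G)`.
-/

namespace TSGraph

variable {α : Type*} {G : TSGraph α}

lemma ne_of_adj {u v : α} (h : G.Adj u v) : u ≠ v :=
  fun huv => G.irrefl u (huv ▸ h)

lemma IsPM.even_card {S : Finset α} {f : α → α} (h : G.IsPM S f) : Even S.card := by
  have hsum : ∑ _v ∈ S, (1 : ZMod 2) = 0 :=
    Finset.sum_involution (fun v _ => f v) (fun _ _ => by decide)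
      (fun v hv _ => (ne_of_adj (h v hv).2.1).symm) (fun v hv => (h v hv).1)
      (fun v hv => (h v hv).2.2)
  simpa [ZMod.natCast_eq_zero_iff_even] using hsum

lemma exists_isPDS_card_eq_gammaP (h : ∃ D, G.IsPDS D) :
    ∃ D, G.IsPDS D ∧ D.card = G.gammaP := by
  obtain ⟨D, hD⟩ := h
  exact Nat.sInf_mem (s := {n | ∃ D, G.IsPDS D ∧ D.card = n}) ⟨D.card, D, hD, rfl⟩

lemma gammaP_le_card {D : Finset α} (h : G.IsPDS D) : G.gammaP ≤ D.card :=
  Nat.sInf_le ⟨D, h, rfl⟩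

variable [DecidableEq α]

lemma IsPM.insert_pair {S : Finset α} {f : α → α} {a b : α} (hf : G.IsPM S f)
    (hab : G.Adj a b) (haS : a ∉ S) (hbS : b ∉ S) :
    ∃ g, G.IsPM (insert a (insert b S)) g := by
  have hne : a ≠ b := ne_of_adj hab
  refine ⟨fun x => if x = a then b else if x = b then a else f x, fun v hv => ?_⟩
  rcases Finset.mem_insert.mp hv with rfl | hv
  · simp [hab, hne.symm]
  rcases Finset.mem_insert.mp hv with rfl | hvS
  · simp [hne.symm, G.symm _ _ hab]
  · obtain ⟨hfv, hadj, hff⟩ := hf v hvS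
    have hva : v ≠ a := ne_of_mem_of_not_mem hvS haS
    have hvb : v ≠ b := ne_of_mem_of_not_mem hvS hbS
    have hfva : f v ≠ a := ne_of_mem_of_not_mem hfv haS
    have hfvb : f v ≠ b := ne_of_mem_of_not_mem hfv hbS
    simp [hva, hvb, hfva, hfvb, hfv, hadj, hff]

lemma adm_zero_iff {S : Finset α} :
    G.Adm 0 S ↔ S ⊆ G.verts ∧ (∀ v ∈ G.verts, v ∉ G.TS → v ∈ S ∨ ∃ u ∈ S, G.Adj u v) ∧
      ∃ f, G.IsPM S f := by
  simp [Adm]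

lemma Adm.even_card_of_zero {S : Finset α} (h : G.Adm 0 S) : Even S.card := by
  obtain ⟨-, -, f, hf⟩ := adm_zero_iff.mp h
  exact hf.even_card

lemma IsPDS.adm_zero {D : Finset α} (h : G.IsPDS D) : G.Adm 0 D := by
  obtain ⟨hsub, hdom, hpm⟩ := h
  exact adm_zero_iff.mpr ⟨hsub, fun v hv _ => hdom v hv, hpm⟩

lemma exists_adm_card_eq_gamma {k : ℕ} (h : ∃ S, G.Adm k S) :
    ∃ S, G.Adm k S ∧ S.card = G.gamma k := by
  obtain ⟨S, hS⟩ := h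
  exact Nat.sInf_mem (s := {n | ∃ S, G.Adm k S ∧ S.card = n}) ⟨S.card, S, hS, rfl⟩

lemma gamma_le_card {k : ℕ} {S : Finset α} (h : G.Adm k S) : G.gamma k ≤ S.card :=
  Nat.sInf_le ⟨S, h, rfl⟩

lemma memD_iff {k : ℕ} {S : Finset α} : G.memD k S ↔ G.Adm k S ∧ S.card = G.gamma k := by
  refine ⟨fun ⟨hS, hmin⟩ => ⟨hS, ?_⟩, fun ⟨hS, hcard⟩ => ⟨hS, fun S' hS' => ?_⟩⟩
  · obtain ⟨S', hS', hcard'⟩ := exists_adm_card_eq_gamma ⟨S, hS⟩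
    exact le_antisymm (hcard' ▸ hmin S' hS') (gamma_le_card hS)
  · exact hcard ▸ gamma_le_card hS'

lemma isPDS_of_adm_zero_of_subset {A B S : Finset α}
    (hjoin : ∀ a ∈ A, ∀ b ∈ B, G.Adj a b) (hTS : G.TS ⊆ A ∪ B) (hA : A.Nonempty)
    (hS : G.Adm 0 S) (hAS : A ⊆ S) : G.IsPDS S := by
  obtain ⟨hsub, hdom, hpm⟩ := adm_zero_iff.mp hS
  refine ⟨hsub, fun v hv => ?_, hpm⟩
  by_cases hvTS : v ∈ G.TS
  · rcases Finset.mem_union.mp (hTS hvTS) with hvA | hvB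
    · exact Or.inl (hAS hvA)
    · obtain ⟨a, ha⟩ := hA
      exact Or.inr ⟨a, hAS ha, hjoin a ha v hvB⟩
  · exact hdom v hv hvTS

lemma isPDS_insert_pair {A B S : Finset α} {a b : α}
    (hjoin : ∀ a ∈ A, ∀ b ∈ B, G.Adj a b) (hTS : G.TS ⊆ A ∪ B) (hS : G.Adm 0 S)
    (ha : a ∈ A) (hb : b ∈ B) (haS : a ∉ S) (hbS : b ∉ S) :
    G.IsPDS (insert a (insert b S)) := by
  obtain ⟨hsub, hdom, f, hf⟩ := adm_zero_iff.mp hS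
  have hab : G.Adj a b := hjoin a ha b hb
  refine ⟨?_, fun v hv => ?_, hf.insert_pair hab haS hbS⟩
  · have := G.adj_mem a b hab
    simp [Finset.insert_subset_iff, this, hsub]
  by_cases hvTS : v ∈ G.TS
  · rcases Finset.mem_union.mp (hTS hvTS) with hvA | hvB
    · exact Or.inr ⟨b, by simp, G.symm _ _ (hjoin v hvA b hb)⟩
    · exact Or.inr ⟨a, by simp, hjoin a ha v hvB⟩
  · rcases hdom v hv hvTS with hvS | ⟨u, huS, hu⟩
    · exact Or.inl (by simp [hvS])
    · exact Or.inr ⟨u, by simp [huS], hu⟩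

lemma exists_isPDS_card_le_add_two {A B S : Finset α}
    (hjoin : ∀ a ∈ A, ∀ b ∈ B, G.Adj a b) (hTS : G.TS ⊆ A ∪ B)
    (hA : A.Nonempty) (hB : B.Nonempty) (hS : G.Adm 0 S) :
    ∃ D, G.IsPDS D ∧ D.card ≤ S.card + 2 := by
  by_cases hAS : A ⊆ S
  · exact ⟨S, isPDS_of_adm_zero_of_subset hjoin hTS hA hS hAS, by omega⟩
  by_cases hBS : B ⊆ S
  · have hjoin' : ∀ b ∈ B, ∀ a ∈ A, G.Adj b a := fun b hb a ha => G.symm _ _ (hjoin a ha b hb)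
    exact ⟨S, isPDS_of_adm_zero_of_subset hjoin' (Finset.union_comm A B ▸ hTS) hB hS hBS,
      by omega⟩
  obtain ⟨a, ha, haS⟩ := Finset.not_subset.mp hAS
  obtain ⟨b, hb, hbS⟩ := Finset.not_subset.mp hBS
  refine ⟨_, isPDS_insert_pair hjoin hTS hS ha hb haS hbS, ?_⟩
  calc (insert a (insert b S)).card ≤ (insert b S).card + 1 := Finset.card_insert_le _ _
    _ ≤ S.card + 2 := by have := Finset.card_insert_le b S; omega

end TSGraph

open TSGraph in
/-- For `G = Gl ⊗ Gr` or `G = Gl ⊕ Gr` with nonempty twin sets and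
`G` admitting a paired-dominating set: if `D_p(G) ∩ D_0(G) = ∅` then
`γ_p(G) = γ_0(G) + 2`, otherwise `γ_p(G) = γ_0(G)`. -/
theorem stmt1 {α : Type*} [DecidableEq α] (G Gl Gr : TSGraph α)
    (hcomp : IsTrueTwin G Gl Gr ∨ IsAttach G Gl Gr)
    (htsl : Gl.TS.Nonempty) (htsr : Gr.TS.Nonempty)
    (hpds : ∃ D, G.IsPDS D) :
    ((¬ ∃ D, G.memDp D ∧ G.memD 0 D) → G.gammaP = G.gamma 0 + 2) ∧
    ((∃ D, G.memDp D ∧ G.memD 0 D) → G.gammaP = G.gamma 0) := by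
  have hjoin : ∀ a ∈ Gl.TS, ∀ b ∈ Gr.TS, G.Adj a b := by
    rcases hcomp with ⟨-, -, hadj, -⟩ | ⟨-, -, hadj, -⟩ <;>
      exact fun a ha b hb => (hadj a b).mpr (Or.inr (Or.inr (Or.inl ⟨ha, hb⟩)))
  have hTS : G.TS ⊆ Gl.TS ∪ Gr.TS := by
    rcases hcomp with ⟨-, -, -, hTS⟩ | ⟨-, -, -, hTS⟩
    · exact hTS.le
    · exact hTS ▸ Finset.subset_union_left
  obtain ⟨Dp, hDp, hDp_card⟩ := exists_isPDS_card_eq_gammaP hpds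
  obtain ⟨S, hS, hS_card⟩ := exists_adm_card_eq_gamma (hpds.imp fun _ => IsPDS.adm_zero)
  obtain ⟨D, hD, hD_card⟩ := exists_isPDS_card_le_add_two hjoin hTS htsl htsr hS
  have hlower : G.gamma 0 ≤ G.gammaP := hDp_card ▸ gamma_le_card hDp.adm_zero
  have hupper : G.gammaP ≤ G.gamma 0 + 2 := hS_card ▸ (gammaP_le_card hD).trans hD_card
  obtain ⟨m, hm⟩ : Even G.gammaP := hDp_card ▸ hDp.adm_zero.even_card_of_zero
  obtain ⟨n, hn⟩ : Even (G.gamma 0) := hS_card ▸ hS.even_card_of_zero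
  have hDp_inter_D0 : (∃ D, G.memDp D ∧ G.memD 0 D) ↔ G.gammaP = G.gamma 0 := by
    refine ⟨fun ⟨D, ⟨_, hcard⟩, hD0⟩ => hcard ▸ (memD_iff.mp hD0).2, fun h => ?_⟩
    exact ⟨Dp, ⟨hDp, hDp_card⟩, memD_iff.mpr ⟨hDp.adm_zero, hDp_card.trans h⟩⟩
  rw [hDp_inter_D0]
  exact ⟨fun hne => by omega, id⟩
end

section
/- Let G = G_l ⊗ G_r be a true twin composition, let D ∈ D_k(G), and let X ⊆ D ∩ TS(G) with |X| = k be such that the subgraph of G induced by D − X has a perfect matching M. Let h be the number of edges of M with one endpoint in TS(G_l) and the other in TS(G_r), and set k_l = |X ∩ TS(G_l)|, k_r = |X ∩ TS(G_r)|, D_l = D ∩ V(G_l), D_r = D ∩ V(G_r). Then D_l ∈ D_{h+k_l}(G_l) and D_r ∈ D_{h+k_r}(G_r); moreover, the set (X ∩ TS(G_l)) together with the TS(G_l)-endpoints of the h crossing edges of M is a set of unpaired vertices with respect to (D_l, M ∩ E(G_l)), and symmetrically the set (X ∩ TS(G_r)) together with the TS(G_r)-endpoints of the h crossing edges of M is a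 set of unpaired vertices with respect to (D_r, M ∩ E(G_r)). -/
section Helpers

open TSGraph

variable {α : Type*} [DecidableEq α]

lemma ttwin_symm {G Gl Gr : TSGraph α} (h : IsTrueTwin G Gl Gr) : IsTrueTwin G Gr Gl := by
  obtain ⟨h1, h2, h3, h4⟩ := h
  exact ⟨h1.symm, by rw [h2, Finset.union_comm], fun u v => by rw [h3 u v]; tauto,
    by rw [h4, Finset.union_comm]⟩

lemma cross_card {G Gl Gr : TSGraph α} {D X : Finset α} {f : α → α}
    (hf : G.IsPM (D \ X) f) :
    ((D \ X).filter (fun v => v ∈ Gl.TS ∧ f v ∈ Gr.TS)).card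
      = ((D \ X).filter (fun v => v ∈ Gr.TS ∧ f v ∈ Gl.TS)).card := by
  refine Finset.card_nbij' f f ?_ ?_ ?_ ?_ <;> intro a ha <;>
    simp only [Finset.mem_coe, Finset.mem_filter] at ha ⊢
  · obtain ⟨ha1, ha2, ha3⟩ := ha
    obtain ⟨h1, _, h3⟩ := hf a ha1
    exact ⟨h1, ha3, by rw [h3]; exact ha2⟩
  · obtain ⟨ha1, ha2, ha3⟩ := ha
    obtain ⟨h1, _, h3⟩ := hf a ha1
    exact ⟨h1, ha3, by rw [h3]; exact ha2⟩
  · exact (hf a ha.1).2.2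
  · exact (hf a ha.1).2.2

lemma pm_side {G Gl Gr : TSGraph α} (hcomp : IsTrueTwin G Gl Gr)
    {D X : Finset α} {f : α → α}
    (hDsub : D ⊆ G.verts) (hX : X ⊆ D ∩ G.TS) (hf : G.IsPM (D \ X) f) :
    ((X ∩ Gl.TS) ∪ (D \ X).filter (fun v => v ∈ Gl.TS ∧ f v ∈ Gr.TS))
        ⊆ (D ∩ Gl.verts) ∩ Gl.TS ∧
    Gl.IsPM ((D ∩ Gl.verts) \
        ((X ∩ Gl.TS) ∪ (D \ X).filter (fun v => v ∈ Gl.TS ∧ f v ∈ Gr.TS))) f := by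
  obtain ⟨hdisj, hverts, hadj, hTS⟩ := hcomp
  have hVlr : ∀ a, a ∈ Gl.verts → a ∈ Gr.verts → False :=
    fun a h1 h2 => Finset.disjoint_left.1 hdisj h1 h2
  constructor
  · intro v hv
    rcases Finset.mem_union.1 hv with h | h
    · obtain ⟨hvX, hvT⟩ := Finset.mem_inter.1 h
      exact Finset.mem_inter.2 ⟨Finset.mem_inter.2
        ⟨(Finset.mem_inter.1 (hX hvX)).1, Gl.TS_sub hvT⟩, hvT⟩
    · obtain ⟨hmem, hvT, _⟩ := Finset.mem_filter.1 h
      exact Finset.mem_inter.2 ⟨Finset.mem_inter.2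
        ⟨(Finset.mem_sdiff.1 hmem).1, Gl.TS_sub hvT⟩, hvT⟩
  · intro v hv
    obtain ⟨hvDVl, hvnU⟩ := Finset.mem_sdiff.1 hv
    obtain ⟨hvD, hvVl⟩ := Finset.mem_inter.1 hvDVl
    rw [Finset.mem_union, not_or] at hvnU
    obtain ⟨hnXl, hnHl⟩ := hvnU
    have hvnX : v ∉ X := by
      intro hvX
      have hvT : v ∈ G.TS := (Finset.mem_inter.1 (hX hvX)).2
      rw [hTS, Finset.mem_union] at hvT
      rcases hvT with h | h
      · exact hnXl (Finset.mem_inter.2 ⟨hvX, h⟩)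
      · exact hVlr v hvVl (Gr.TS_sub h)
    have hvDX : v ∈ D \ X := Finset.mem_sdiff.2 ⟨hvD, hvnX⟩
    obtain ⟨hf1, hf2, hf3⟩ := hf v hvDX
    rw [hadj] at hf2
    have hGlAdj : Gl.Adj v (f v) := by
      rcases hf2 with h | h | h | h
      · exact h
      · exact absurd ((Gr.adj_mem _ _ h).1) (fun h' => hVlr v hvVl h')
      · exact absurd (Finset.mem_filter.2 ⟨hvDX, h⟩) hnHl
      · exact absurd (Gr.TS_sub h.1) (fun h' => hVlr v hvVl h')
    have hfVl : f v ∈ Gl.verts := (Gl.adj_mem _ _ hGlAdj).2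
    refine ⟨Finset.mem_sdiff.2 ⟨Finset.mem_inter.2
      ⟨(Finset.mem_sdiff.1 hf1).1, hfVl⟩, ?_⟩, hGlAdj, hf3⟩
    rw [Finset.mem_union, not_or]
    constructor
    · intro h
      exact (Finset.mem_sdiff.1 hf1).2 (Finset.mem_inter.1 h).1
    · intro h
      obtain ⟨_, _, hT2⟩ := Finset.mem_filter.1 h
      rw [hf3] at hT2
      exact hVlr v hvVl (Gr.TS_sub hT2)

lemma memD_side {G Gl Gr : TSGraph α} (hcomp : IsTrueTwin G Gl Gr)
    {k : ℕ} {D X : Finset α} {f : α → α}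
    (hD : G.memD k D) (hX : X ⊆ D ∩ G.TS) (hXcard : X.card = k)
    (hf : G.IsPM (D \ X) f) :
    Gl.memD (((D \ X).filter (fun v => v ∈ Gl.TS ∧ f v ∈ Gr.TS)).card
        + (X ∩ Gl.TS).card) (D ∩ Gl.verts) := by
  obtain ⟨hdisj, hverts, hadj, hTS⟩ := id hcomp
  have hVlr : ∀ a, a ∈ Gl.verts → a ∈ Gr.verts → False :=
    fun a h1 h2 => Finset.disjoint_left.1 hdisj h1 h2
  obtain ⟨⟨hDsub, hDdom, _⟩, hDmin⟩ := hD
  have hps := pm_side hcomp hDsub hX hf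
  have hpr := pm_side (ttwin_symm hcomp) hDsub hX hf
  have hXTS : X ⊆ G.TS := fun a ha => (Finset.mem_inter.1 (hX ha)).2
  have hTSd : Disjoint Gl.TS Gr.TS := hdisj.mono Gl.TS_sub Gr.TS_sub
  have hXsplit : (X ∩ Gl.TS) ∪ (X ∩ Gr.TS) = X := by
    rw [← Finset.inter_union_distrib_left, ← hTS, Finset.inter_eq_left.2 hXTS]
  have hXsplitcard : (X ∩ Gl.TS).card + (X ∩ Gr.TS).card = k := by
    have h := Finset.card_union_of_disjoint (s := X ∩ Gl.TS) (t := X ∩ Gr.TS)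
      (hTSd.mono Finset.inter_subset_right Finset.inter_subset_right)
    rw [hXsplit, hXcard] at h
    omega
  constructor
  · -- Admissibility
    refine ⟨Finset.inter_subset_right, ?_, ?_⟩
    · -- domination
      intro v hv hvT
      have hvG : v ∈ G.verts := by rw [hverts]; exact Finset.mem_union_left _ hv
      have hvGT : v ∉ G.TS := by
        rw [hTS, Finset.mem_union, not_or]
        exact ⟨hvT, fun h => hVlr v hv (Gr.TS_sub h)⟩
      rcases hDdom v hvG hvGT with h | ⟨u, hu, huv⟩
      · exact Or.inl (Finset.mem_inter.2 ⟨h, hv⟩)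
      · rw [hadj] at huv
        rcases huv with h | h | h | h
        · exact Or.inr ⟨u, Finset.mem_inter.2 ⟨hu, (Gl.adj_mem u v h).1⟩, h⟩
        · exact absurd ((Gr.adj_mem _ _ h).2) (fun h' => hVlr v hv h')
        · exact absurd (Gr.TS_sub h.2) (fun h' => hVlr v hv h')
        · exact absurd h.2 hvT
    · -- matching witness
      refine ⟨(X ∩ Gl.TS) ∪ (D \ X).filter (fun v => v ∈ Gl.TS ∧ f v ∈ Gr.TS),
        hps.1, ?_, f, hps.2⟩
      rw [Finset.card_union_of_disjoint, Nat.add_comm]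
      rw [Finset.disjoint_left]
      intro a ha ha'
      exact (Finset.mem_sdiff.1 (Finset.mem_filter.1 ha').1).2 (Finset.mem_inter.1 ha).1
  · -- Minimality
    intro S' hS'
    obtain ⟨hS'sub, hS'dom, X', hX'sub, hX'card, f', hf'⟩ := hS'
    have hX'Vl : ∀ a ∈ X', a ∈ Gl.TS := fun a ha => (Finset.mem_inter.1 (hX'sub ha)).2
    have hX'S' : ∀ a ∈ X', a ∈ S' := fun a ha => (Finset.mem_inter.1 (hX'sub ha)).1
    obtain ⟨Xl', hXl'sub, hXl'card⟩ := Finset.exists_subset_card_eq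
      (show (X ∩ Gl.TS).card ≤ X'.card by rw [hX'card]; exact Nat.le_add_left _ _)
    set Hl := (D \ X).filter (fun v => v ∈ Gl.TS ∧ f v ∈ Gr.TS) with hHl
    set A := X' \ Xl' with hA
    set B := (D \ X).filter (fun v => v ∈ Gr.TS ∧ f v ∈ Gl.TS) with hB
    have hcc : Hl.card = B.card := cross_card hf
    have hAcard : A.card = B.card := by
      rw [hA, Finset.card_sdiff_of_subset hXl'sub, hX'card, hXl'card]
      omega
    have e : {x // x ∈ A} ≃ {x // x ∈ B} := Finset.equivOfCardEq hAcard
    classical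
    set S : Finset α := S' ∪ (D ∩ Gr.verts) with hS
    set X'' : Finset α := Xl' ∪ (X ∩ Gr.TS) with hX''
    -- membership facts
    have hATSl : ∀ a ∈ A, a ∈ Gl.TS := fun a ha => hX'Vl a (Finset.mem_sdiff.1 ha).1
    have hBfact : ∀ b ∈ B, b ∈ D \ X ∧ b ∈ Gr.TS ∧ f b ∈ Gl.TS :=
      fun b hb => by
        obtain ⟨h1, h2, h3⟩ := Finset.mem_filter.1 hb; exact ⟨h1, h2, h3⟩
    have hAVl : ∀ a ∈ A, a ∈ Gl.verts := fun a ha => Gl.TS_sub (hATSl a ha)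
    have hBVr : ∀ b ∈ B, b ∈ Gr.verts := fun b hb => Gr.TS_sub (hBfact b hb).2.1
    have hAB : ∀ a ∈ A, a ∉ B := fun a ha hb => hVlr a (hAVl a ha) (hBVr a hb)
    -- the combined matching
    set g : α → α := fun v =>
      if hv : v ∈ A then (e ⟨v, hv⟩ : α)
      else if hv : v ∈ B then (e.symm ⟨v, hv⟩ : α)
      else if v ∈ S' \ X' then f' v else f v with hg
    have hgA : ∀ a (ha : a ∈ A), g a = (e ⟨a, ha⟩ : α) := fun a ha => dif_pos ha
    have hgB : ∀ b (hb : b ∈ B), g b = (e.symm ⟨b, hb⟩ : α) := by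
      intro b hb
      rw [hg]
      simp only
      rw [dif_neg (fun ha => hAB b ha hb), dif_pos hb]
    have hgS' : ∀ w ∈ S' \ X', g w = f' w := by
      intro w hw
      obtain ⟨hw1, hw2⟩ := Finset.mem_sdiff.1 hw
      rw [hg]
      simp only
      rw [dif_neg (fun ha => hw2 (Finset.mem_sdiff.1 ha).1),
        dif_neg (fun hb => hVlr w (hS'sub hw1) (hBVr w hb)), if_pos hw]
    have hgDr : ∀ w ∈ (D ∩ Gr.verts) \ ((X ∩ Gr.TS) ∪ B), g w = f w := by
      intro w hw
      obtain ⟨hw1, hw2⟩ := Finset.mem_sdiff.1 hw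
      obtain ⟨hwD, hwVr⟩ := Finset.mem_inter.1 hw1
      rw [Finset.mem_union, not_or] at hw2
      rw [hg]
      simp only
      rw [dif_neg (fun ha => hVlr w (hAVl w ha) hwVr), dif_neg hw2.2,
        if_neg (fun h => hVlr w (hS'sub (Finset.mem_sdiff.1 h).1) hwVr)]
    -- memberships in S \ X''
    have hAS : ∀ a ∈ A, a ∈ S \ X'' := by
      intro a ha
      obtain ⟨ha1, ha2⟩ := Finset.mem_sdiff.1 ha
      refine Finset.mem_sdiff.2 ⟨Finset.mem_union_left _ (hX'S' a ha1), ?_⟩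
      rw [hX'', Finset.mem_union, not_or]
      exact ⟨ha2, fun h => hVlr a (hAVl a ha) (Gr.TS_sub (Finset.mem_inter.1 h).2)⟩
    have hBS : ∀ b ∈ B, b ∈ S \ X'' := by
      intro b hb
      obtain ⟨h1, h2, _⟩ := hBfact b hb
      refine Finset.mem_sdiff.2 ⟨Finset.mem_union_right _
        (Finset.mem_inter.2 ⟨(Finset.mem_sdiff.1 h1).1, Gr.TS_sub h2⟩), ?_⟩
      rw [hX'', Finset.mem_union, not_or]
      exact ⟨fun h => hVlr b (Gl.TS_sub (hX'Vl b (hXl'sub h))) (Gr.TS_sub h2),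
        fun h => (Finset.mem_sdiff.1 h1).2 (Finset.mem_inter.1 h).1⟩
    have hS'S : ∀ w ∈ S' \ X', w ∈ S \ X'' := by
      intro w hw
      obtain ⟨hw1, hw2⟩ := Finset.mem_sdiff.1 hw
      refine Finset.mem_sdiff.2 ⟨Finset.mem_union_left _ hw1, ?_⟩
      rw [hX'', Finset.mem_union, not_or]
      exact ⟨fun h => hw2 (hXl'sub h),
        fun h => hVlr w (hS'sub hw1) (Gr.TS_sub (Finset.mem_inter.1 h).2)⟩
    have hDrS : ∀ w ∈ (D ∩ Gr.verts) \ ((X ∩ Gr.TS) ∪ B), w ∈ S \ X'' := by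
      intro w hw
      obtain ⟨hw1, hw2⟩ := Finset.mem_sdiff.1 hw
      rw [Finset.mem_union, not_or] at hw2
      refine Finset.mem_sdiff.2 ⟨Finset.mem_union_right _ hw1, ?_⟩
      rw [hX'', Finset.mem_union, not_or]
      exact ⟨fun h => hVlr w (Gl.TS_sub (hX'Vl w (hXl'sub h)))
        (Finset.mem_inter.1 hw1).2, hw2.1⟩
    -- the combined set is admissible for G
    have hAdmS : G.Adm k S := by
      refine ⟨?_, ?_, X'', ?_, ?_, g, ?_⟩
      · -- S ⊆ G.verts
        intro a ha
        rw [hverts]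
        rcases Finset.mem_union.1 ha with h | h
        · exact Finset.mem_union_left _ (hS'sub h)
        · exact Finset.mem_union_right _ (Finset.mem_inter.1 h).2
      · -- domination
        intro v hv hvT
        rw [hTS, Finset.mem_union, not_or] at hvT
        rw [hverts, Finset.mem_union] at hv
        rcases hv with hv | hv
        · rcases hS'dom v hv hvT.1 with h | ⟨u, hu, huv⟩
          · exact Or.inl (Finset.mem_union_left _ h)
          · exact Or.inr ⟨u, Finset.mem_union_left _ hu, (hadj u v).2 (Or.inl huv)⟩
        · have hvG : v ∈ G.verts := by rw [hverts]; exact Finset.mem_union_right _ hv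
          have hvGT : v ∉ G.TS := by
            rw [hTS, Finset.mem_union, not_or]; exact hvT
          rcases hDdom v hvG hvGT with h | ⟨u, hu, huv⟩
          · exact Or.inl (Finset.mem_union_right _ (Finset.mem_inter.2 ⟨h, hv⟩))
          · rw [hadj] at huv
            rcases huv with h | h | h | h
            · exact absurd ((Gl.adj_mem _ _ h).2) (fun h' => hVlr v h' hv)
            · exact Or.inr ⟨u, Finset.mem_union_right _
                (Finset.mem_inter.2 ⟨hu, (Gr.adj_mem u v h).1⟩), (hadj u v).2 (Or.inr (Or.inl h))⟩
            · exact absurd h.2 hvT.2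
            · exact absurd (Gl.TS_sub h.2) (fun h' => hVlr v h' hv)
      · -- X'' ⊆ S ∩ G.TS
        intro a ha
        rcases Finset.mem_union.1 ha with h | h
        · refine Finset.mem_inter.2 ⟨Finset.mem_union_left _ (hX'S' a (hXl'sub h)), ?_⟩
          rw [hTS]; exact Finset.mem_union_left _ (hX'Vl a (hXl'sub h))
        · obtain ⟨h1, h2⟩ := Finset.mem_inter.1 h
          refine Finset.mem_inter.2 ⟨Finset.mem_union_right _ (Finset.mem_inter.2
            ⟨(Finset.mem_inter.1 (hX h1)).1, Gr.TS_sub h2⟩), ?_⟩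
          rw [hTS]; exact Finset.mem_union_right _ h2
      · -- card X'' = k
        rw [hX'', Finset.card_union_of_disjoint, hXl'card, hXsplitcard]
        rw [Finset.disjoint_left]
        intro a ha ha'
        exact hVlr a (Gl.TS_sub (hX'Vl a (hXl'sub ha)))
          (Gr.TS_sub (Finset.mem_inter.1 ha').2)
      · -- g is a PM of S \ X''
        intro v hv
        by_cases hvA : v ∈ A
        · have hb : (e ⟨v, hvA⟩ : α) ∈ B := (e ⟨v, hvA⟩).2
          rw [hgA v hvA]
          refine ⟨hBS _ hb, (hadj _ _).2 (Or.inr (Or.inr (Or.inl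
            ⟨hATSl v hvA, (hBfact _ hb).2.1⟩))), ?_⟩
          rw [hgB _ hb]
          simp
        · by_cases hvB : v ∈ B
          · have ha : (e.symm ⟨v, hvB⟩ : α) ∈ A := (e.symm ⟨v, hvB⟩).2
            rw [hgB v hvB]
            refine ⟨hAS _ ha, (hadj _ _).2 (Or.inr (Or.inr (Or.inr
              ⟨(hBfact v hvB).2.1, hATSl _ ha⟩))), ?_⟩
            rw [hgA _ ha]
            simp
          · by_cases hvS' : v ∈ S' \ X'
            · obtain ⟨h1, h2, h3⟩ := hf' v hvS'
              rw [hgS' v hvS']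
              exact ⟨hS'S _ h1, (hadj _ _).2 (Or.inl h2), by rw [hgS' _ h1, h3]⟩
            · -- v must be in the right part
              have hvDr : v ∈ (D ∩ Gr.verts) \ ((X ∩ Gr.TS) ∪ B) := by
                obtain ⟨hvS, hvX''⟩ := Finset.mem_sdiff.1 hv
                rw [hX'', Finset.mem_union, not_or] at hvX''
                rcases Finset.mem_union.1 hvS with h | h
                · exfalso
                  by_cases hx : v ∈ X'
                  · exact hvA (Finset.mem_sdiff.2 ⟨hx, hvX''.1⟩)
                  · exact hvS' (Finset.mem_sdiff.2 ⟨h, hx⟩)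
                · refine Finset.mem_sdiff.2 ⟨h, ?_⟩
                  rw [Finset.mem_union, not_or]
                  exact ⟨hvX''.2, hvB⟩
              obtain ⟨h1, h2, h3⟩ := hpr.2 v hvDr
              rw [hgDr v hvDr]
              exact ⟨hDrS _ h1, (hadj _ _).2 (Or.inr (Or.inl h2)), by rw [hgDr _ h1, h3]⟩
    -- conclude by minimality of D
    have h1 : D.card ≤ S.card := hDmin S hAdmS
    have h2 : S.card ≤ S'.card + (D ∩ Gr.verts).card := Finset.card_union_le _ _
    have h3 : D.card = (D ∩ Gl.verts).card + (D ∩ Gr.verts).card := by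
      have hu : (D ∩ Gl.verts) ∪ (D ∩ Gr.verts) = D := by
        rw [← Finset.inter_union_distrib_left, ← hverts, Finset.inter_eq_left.2 hDsub]
      have h := Finset.card_union_of_disjoint (s := D ∩ Gl.verts) (t := D ∩ Gr.verts)
        (hdisj.mono Finset.inter_subset_right Finset.inter_subset_right)
      rw [hu] at h
      exact h
    omega

end Helpers

open TSGraph in
/-- For a true twin composition `G = Gl ⊗ Gr`, `D ∈ D_k(G)` with
unpaired set `X` and perfect matching `M` (encoded by the involution `f`) of
`G[D − X]`: with `h` the number of crossing edges of `M`, `D_l ∈ D_{h+k_l}(Gl)`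
and `D_r ∈ D_{h+k_r}(Gr)`, and `X_l`, `X_r` are sets of unpaired vertices with
respect to `(D_l, M ∩ E(Gl))` and `(D_r, M ∩ E(Gr))`, respectively. -/
theorem stmt5 {α : Type*} [DecidableEq α] (G Gl Gr : TSGraph α)
    (hcomp : IsTrueTwin G Gl Gr) (k : ℕ) (D X : Finset α) (f : α → α)
    (hD : G.memD k D) (hX : X ⊆ D ∩ G.TS) (hXcard : X.card = k)
    (hf : G.IsPM (D \ X) f) :
    Gl.memD (((D \ X).filter (fun v => v ∈ Gl.TS ∧ f v ∈ Gr.TS)).card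
        + (X ∩ Gl.TS).card) (D ∩ Gl.verts) ∧
    Gr.memD (((D \ X).filter (fun v => v ∈ Gl.TS ∧ f v ∈ Gr.TS)).card
        + (X ∩ Gr.TS).card) (D ∩ Gr.verts) ∧
    ((X ∩ Gl.TS) ∪ (D \ X).filter (fun v => v ∈ Gl.TS ∧ f v ∈ Gr.TS))
        ⊆ (D ∩ Gl.verts) ∩ Gl.TS ∧
    Gl.IsPM ((D ∩ Gl.verts) \
        ((X ∩ Gl.TS) ∪ (D \ X).filter (fun v => v ∈ Gl.TS ∧ f v ∈ Gr.TS))) f ∧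
    ((X ∩ Gr.TS) ∪ (D \ X).filter (fun v => v ∈ Gr.TS ∧ f v ∈ Gl.TS))
        ⊆ (D ∩ Gr.verts) ∩ Gr.TS ∧
    Gr.IsPM ((D ∩ Gr.verts) \
        ((X ∩ Gr.TS) ∪ (D \ X).filter (fun v => v ∈ Gr.TS ∧ f v ∈ Gl.TS))) f := by
  have hDsub : D ⊆ G.verts := hD.1.1
  have hl := pm_side hcomp hDsub hX hf
  have hr := pm_side (ttwin_symm hcomp) hDsub hX hf
  refine ⟨memD_side hcomp hD hX hXcard hf, ?_, hl.1, hl.2, hr.1, hr.2⟩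
  rw [cross_card hf]
  exact memD_side (ttwin_symm hcomp) hD hX hXcard hf
end

section
/- Let G = G_l ⊗ G_r be a true twin composition, assume D_k(H) ≠ ∅ for each H ∈ {G, G_l, G_r} and each 0 ≤ k ≤ |TS(H)|, and assume Equation (2) holds for G_l and for G_r. Then γ_{α(G)+2i}(G) = min(G) for every integer 0 ≤ i ≤ (β(G) − α(G))/2. -/
/-!
Split an admissible set `S` of `G = Gl ⊗ Gr` along the two sides. A matching edge of `S − X`
that crosses between the sides joins two twin vertices, so removing the `c` crossing edges leaves
admissible sets of `Gl` and `Gr` for parameters `pl`, `pr` with `pl + pr = k + 2c` and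
`c ≤ pl, pr`; conversely, two such sets glue back by matching `c` unmatched twin vertices of each
side across. Hence `min(G) = min(Gl) + min(Gr)`, and `γ_k(G) = min(G)` exactly when `k` arises in
this way from minimising indices `pl` of `Gl` and `pr` of `Gr`. By Equation (2), the minimising
indices of each side are closed under `p ↦ p + 2` below `β`, so starting from `α(G)` the index can
be raised by `2` as long as it stays below `β(Gl) + β(Gr)`, which bounds `β(G)`.
-/

namespace TSGraph

open Finset

variable {α : Type*}

theorem card_filter_and_comp_eq_of_involutive {T : Finset α} {f : α → α}
    (hf : ∀ v ∈ T, f v ∈ T ∧ f (f v) = v) (p q : α → Prop) [DecidablePred p] [DecidablePred q] :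
    (T.filter fun v => p v ∧ q (f v)).card = (T.filter fun v => q v ∧ p (f v)).card := by
  refine card_bij' (fun v _ => f v) (fun v _ => f v) ?_ ?_ ?_ ?_ <;>
    simp only [mem_filter] <;> rintro v ⟨hv, hpv, hqv⟩
  all_goals first
    | exact (hf v hv).2
    | exact ⟨(hf v hv).1, hqv, by rwa [(hf v hv).2]⟩

theorem IsPM.mono {H G : TSGraph α} {S : Finset α} {f : α → α}
    (hHG : ∀ u v, H.Adj u v → G.Adj u v) (hf : H.IsPM S f) : G.IsPM S f :=
  fun v hv => ⟨(hf v hv).1, hHG _ _ (hf v hv).2.1, (hf v hv).2.2⟩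

variable [DecidableEq α]

theorem IsPM.piecewise {G : TSGraph α} {A B : Finset α} {f g : α → α} (hf : G.IsPM A f)
    (hg : G.IsPM B g) (hAB : Disjoint A B) : G.IsPM (A ∪ B) (A.piecewise f g) := by
  intro v hv
  rcases mem_union.1 hv with hvA | hvB
  · obtain ⟨hw, hadj, hinv⟩ := hf v hvA
    rw [piecewise_eq_of_mem _ _ _ hvA, piecewise_eq_of_mem _ _ _ hw]
    exact ⟨mem_union_left _ hw, hadj, hinv⟩
  · obtain ⟨hw, hadj, hinv⟩ := hg v hvB
    rw [piecewise_eq_of_notMem _ _ _ (disjoint_right.1 hAB hvB),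
      piecewise_eq_of_notMem _ _ _ (disjoint_right.1 hAB hw)]
    exact ⟨mem_union_right _ hw, hadj, hinv⟩

theorem exists_isPM_of_forall_adj {G : TSGraph α} {A B : Finset α} (hAB : Disjoint A B)
    (hcard : A.card = B.card) (hadj : ∀ a ∈ A, ∀ b ∈ B, G.Adj a b) : ∃ f, G.IsPM (A ∪ B) f := by
  let σ : A ≃ B := equivOfCardEq hcard
  refine ⟨fun v => if h : v ∈ A then σ ⟨v, h⟩ else if h : v ∈ B then σ.symm ⟨v, h⟩ else v, ?_⟩
  intro v hv
  by_cases hvA : v ∈ A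
  · have hσA : (σ ⟨v, hvA⟩ : α) ∉ A := disjoint_right.1 hAB (σ ⟨v, hvA⟩).2
    simp [hvA, hσA, hadj v hvA _ (σ ⟨v, hvA⟩).2]
  · have hvB : v ∈ B := (mem_union.1 hv).resolve_left hvA
    simp [hvA, hvB, G.symm _ _ (hadj _ (σ.symm ⟨v, hvB⟩).2 v hvB)]

def minIndices (H : TSGraph α) : Set ℕ :=
  {k | k ≤ H.TS.card ∧ H.gamma k = H.minVal}

section Gamma

variable {H : TSGraph α} {k : ℕ} {S : Finset α}

theorem Adm.le_card_TS (h : H.Adm k S) : k ≤ H.TS.card := by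
  obtain ⟨-, -, X, hX, rfl, -⟩ := h
  exact (card_le_card hX).trans (card_le_card inter_subset_right)

theorem gamma_le_card_s11 (h : H.Adm k S) : H.gamma k ≤ S.card :=
  Nat.sInf_le ⟨S, h, rfl⟩

theorem DkNonempty.exists_adm_card_eq (h : H.DkNonempty k) :
    ∃ S, H.Adm k S ∧ S.card = H.gamma k := by
  obtain ⟨S, hS, -⟩ := h
  exact Nat.sInf_mem (s := {n | ∃ S, H.Adm k S ∧ S.card = n}) ⟨_, S, hS, rfl⟩

theorem minVal_le_gamma (h : k ≤ H.TS.card) : H.minVal ≤ H.gamma k :=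
  Nat.sInf_le ⟨k, h, rfl⟩

theorem minIndices_nonempty (H : TSGraph α) : H.minIndices.Nonempty := by
  obtain ⟨k, hk, hgk⟩ :=
    Nat.sInf_mem (s := {n | ∃ k ≤ H.TS.card, H.gamma k = n}) ⟨_, 0, Nat.zero_le _, rfl⟩
  exact ⟨k, hk, hgk⟩

theorem minIndices_bddAbove (H : TSGraph α) : BddAbove H.minIndices :=
  ⟨H.TS.card, fun _ hk => hk.1⟩

theorem alphaVal_mem_minIndices (H : TSGraph α) : H.alphaVal ∈ H.minIndices :=
  Nat.sInf_mem H.minIndices_nonempty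

theorem betaVal_mem_minIndices (H : TSGraph α) : H.betaVal ∈ H.minIndices :=
  Nat.sSup_mem H.minIndices_nonempty H.minIndices_bddAbove

theorem alphaVal_le (hk : k ∈ H.minIndices) : H.alphaVal ≤ k :=
  Nat.sInf_le hk

theorem le_betaVal (hk : k ∈ H.minIndices) : k ≤ H.betaVal :=
  le_csSup H.minIndices_bddAbove hk

theorem Eq2Holds.add_two_mem_minIndices (hH : H.Eq2Holds) (hk : k ∈ H.minIndices)
    (hkβ : k + 2 ≤ H.betaVal) : k + 2 ∈ H.minIndices := by
  have hαk := alphaVal_le hk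
  have hk2 : k + 2 ≤ H.TS.card := hkβ.trans H.betaVal_mem_minIndices.1
  have heven : Even (k - H.alphaVal) := by
    rcases hαk.eq_or_lt with hα | hα
    · simp [← hα]
    · by_contra hodd
      have hγ := (hH k hk.1).2.2.2 hα (by omega) hodd
      exact absurd (hk.2.symm.trans hγ) (by omega)
  rcases hkβ.eq_or_lt with hβ | hβ
  · exact hβ ▸ H.betaVal_mem_minIndices
  · obtain ⟨m, hm⟩ := heven
    exact ⟨hk2, (hH (k + 2) hk2).2.2.1 (by omega) hβ ⟨m + 1, by omega⟩⟩

end Gamma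

/-- `k` is obtained from `pl` and `pr` by matching `c` twin vertices of each side to each other. -/
def IsTwinSplit (pl pr k : ℕ) : Prop :=
  ∃ c, c ≤ pl ∧ c ≤ pr ∧ pl + pr = k + 2 * c

def minSplits (Gl Gr : TSGraph α) : Set ℕ :=
  {k | ∃ pl ∈ Gl.minIndices, ∃ pr ∈ Gr.minIndices, IsTwinSplit pl pr k}

theorem add_two_mem_minSplits {Gl Gr : TSGraph α} {k : ℕ} (hl : Gl.Eq2Holds) (hr : Gr.Eq2Holds)
    (hk : k ∈ minSplits Gl Gr) (hkβ : k + 2 ≤ Gl.betaVal + Gr.betaVal) :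
    k + 2 ∈ minSplits Gl Gr := by
  obtain ⟨pl, hpl, pr, hpr, c, hcl, hcr, hsum⟩ := hk
  rcases c with _ | c
  · have := le_betaVal hpl
    have := le_betaVal hpr
    by_cases hl2 : pl + 2 ≤ Gl.betaVal
    · exact ⟨pl + 2, hl.add_two_mem_minIndices hpl hl2, pr, hpr, 0, by omega, by omega, by omega⟩
    by_cases hr2 : pr + 2 ≤ Gr.betaVal
    · exact ⟨pl, hpl, pr + 2, hr.add_two_mem_minIndices hpr hr2, 0, by omega, by omega, by omega⟩
    -- here `pl + 1 = β(Gl)` and `pr + 1 = β(Gr)`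
    exact ⟨_, Gl.betaVal_mem_minIndices, _, Gr.betaVal_mem_minIndices, 0, by omega, by omega,
      by omega⟩
  · exact ⟨pl, hpl, pr, hpr, c, by omega, by omega, by omega⟩

def DominatesOutsideTS (G : TSGraph α) (S : Finset α) : Prop :=
  ∀ v ∈ G.verts, v ∉ G.TS → v ∈ S ∨ ∃ u ∈ S, G.Adj u v

namespace IsTrueTwin

variable {G Gl Gr : TSGraph α} {u v : α} {k : ℕ}

theorem symm (h : IsTrueTwin G Gl Gr) : IsTrueTwin G Gr Gl := by
  obtain ⟨hd, hV, hadj, hTS⟩ := h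
  exact ⟨hd.symm, hV.trans (union_comm _ _), fun u v => (hadj u v).trans (by tauto),
    hTS.trans (union_comm _ _)⟩

theorem notMem_right (h : IsTrueTwin G Gl Gr) (hv : v ∈ Gl.verts) : v ∉ Gr.verts :=
  disjoint_left.1 h.1 hv

theorem mem_right_of_notMem_left (h : IsTrueTwin G Gl Gr) (hv : v ∈ G.verts)
    (hvl : v ∉ Gl.verts) : v ∈ Gr.verts :=
  (mem_union.1 (h.2.1 ▸ hv)).resolve_left hvl

theorem mem_TS_left (h : IsTrueTwin G Gl Gr) (hv : v ∈ G.TS) (hvl : v ∈ Gl.verts) :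
    v ∈ Gl.TS :=
  (mem_union.1 (h.2.2.2 ▸ hv)).resolve_right fun hvr => h.notMem_right hvl (Gr.TS_sub hvr)

theorem adj_of_left (h : IsTrueTwin G Gl Gr) (huv : Gl.Adj u v) : G.Adj u v :=
  (h.2.2.1 u v).2 (Or.inl huv)

theorem adj_of_mem_TS (h : IsTrueTwin G Gl Gr) (hu : u ∈ Gl.TS) (hv : v ∈ Gr.TS) : G.Adj u v :=
  (h.2.2.1 u v).2 (Or.inr (Or.inr (Or.inl ⟨hu, hv⟩)))

theorem left_adj (h : IsTrueTwin G Gl Gr) (huv : G.Adj u v) (hu : u ∈ Gl.verts)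
    (hv : v ∈ Gl.verts) : Gl.Adj u v := by
  rcases (h.2.2.1 u v).1 huv with hl | hr | ⟨-, hv'⟩ | ⟨hu', -⟩
  · exact hl
  · exact absurd (Gr.adj_mem _ _ hr).1 (h.notMem_right hu)
  · exact absurd (Gr.TS_sub hv') (h.notMem_right hv)
  · exact absurd (Gr.TS_sub hu') (h.notMem_right hu)

theorem mem_TS_of_adj (h : IsTrueTwin G Gl Gr) (huv : G.Adj u v) (hu : u ∈ Gl.verts)
    (hv : v ∉ Gl.verts) : u ∈ Gl.TS := by
  rcases (h.2.2.1 u v).1 huv with hl | hr | ⟨hu', -⟩ | ⟨hu', -⟩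
  · exact absurd (Gl.adj_mem _ _ hl).2 hv
  · exact absurd (Gr.adj_mem _ _ hr).1 (h.notMem_right hu)
  · exact hu'
  · exact absurd (Gr.TS_sub hu') (h.notMem_right hu)

theorem card_eq_add {S : Finset α} (h : IsTrueTwin G Gl Gr) (hS : S ⊆ G.verts) :
    S.card = (S ∩ Gl.verts).card + (S ∩ Gr.verts).card := by
  rw [← card_union_of_disjoint (h.1.mono inter_subset_right inter_subset_right),
    ← inter_union_distrib_left, ← h.2.1, inter_eq_left.2 hS]

theorem card_TS (h : IsTrueTwin G Gl Gr) : G.TS.card = Gl.TS.card + Gr.TS.card := by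
  rw [h.2.2.2, card_union_of_disjoint (h.1.mono Gl.TS_sub Gr.TS_sub)]

variable {S X : Finset α} {f : α → α}

theorem dominatesOutsideTS_inter_left (h : IsTrueTwin G Gl Gr) (hS : G.DominatesOutsideTS S) :
    Gl.DominatesOutsideTS (S ∩ Gl.verts) := by
  intro v hv hvTS
  rcases hS v (h.2.1 ▸ mem_union_left _ hv) (fun hv' => hvTS (h.mem_TS_left hv' hv))
    with hvS | ⟨u, huS, huv⟩
  · exact Or.inl (mem_inter.2 ⟨hvS, hv⟩)
  · by_cases hu : u ∈ Gl.verts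
    · exact Or.inr ⟨u, mem_inter.2 ⟨huS, hu⟩, h.left_adj huv hu hv⟩
    · exact absurd (h.mem_TS_of_adj (G.symm _ _ huv) hv hu) hvTS

theorem isPM_inter_left (h : IsTrueTwin G Gl Gr) (hSV : S ⊆ G.verts) (hf : G.IsPM (S \ X) f) :
    Gl.IsPM ((S ∩ Gl.verts) \
      (X ∩ Gl.verts ∪ (S \ X).filter fun v => v ∈ Gl.verts ∧ f v ∈ Gr.verts)) f := by
  intro v hv
  simp only [mem_sdiff, mem_inter, mem_union, mem_filter, not_or, not_and] at hv
  obtain ⟨⟨hvS, hvl⟩, hvXl, hvM⟩ := hv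
  have hvX : v ∉ X := fun hx => hvXl hx hvl
  obtain ⟨hw, hadj, hinv⟩ := hf v (mem_sdiff.2 ⟨hvS, hvX⟩)
  obtain ⟨hwS, hwX⟩ := mem_sdiff.1 hw
  have hwl : f v ∈ Gl.verts := by
    by_contra hwl
    exact hvM ⟨hvS, hvX⟩ hvl (h.mem_right_of_notMem_left (hSV hwS) hwl)
  refine ⟨?_, h.left_adj hadj hvl hwl, hinv⟩
  simp only [mem_sdiff, mem_inter, mem_union, mem_filter, not_or, not_and]
  exact ⟨⟨hwS, hwl⟩, fun hx => absurd hx hwX, fun _ _ hr => h.notMem_right hvl (hinv ▸ hr)⟩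

theorem adm_inter_left (h : IsTrueTwin G Gl Gr) (hSV : S ⊆ G.verts) (hS : G.DominatesOutsideTS S)
    (hX : X ⊆ S ∩ G.TS) (hf : G.IsPM (S \ X) f) :
    Gl.Adm ((X ∩ Gl.verts).card + ((S \ X).filter fun v => v ∈ Gl.verts ∧ f v ∈ Gr.verts).card)
      (S ∩ Gl.verts) := by
  refine ⟨inter_subset_right, h.dominatesOutsideTS_inter_left hS, _, ?_,
    card_union_of_disjoint ?_, f, h.isPM_inter_left hSV hf⟩
  · intro v hv
    rcases mem_union.1 hv with hvX | hvM
    · obtain ⟨hvX, hvl⟩ := mem_inter.1 hvX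
      obtain ⟨hvS, hvTS⟩ := mem_inter.1 (hX hvX)
      exact mem_inter.2 ⟨mem_inter.2 ⟨hvS, hvl⟩, h.mem_TS_left hvTS hvl⟩
    · obtain ⟨hvSX, hvl, hwr⟩ := mem_filter.1 hvM
      exact mem_inter.2 ⟨mem_inter.2 ⟨(mem_sdiff.1 hvSX).1, hvl⟩,
        h.mem_TS_of_adj (hf v hvSX).2.1 hvl (h.symm.notMem_right hwr)⟩
  · exact disjoint_left.2 fun v hvX hvM => (mem_sdiff.1 (mem_filter.1 hvM).1).2 (mem_inter.1 hvX).1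

theorem exists_adm_split (h : IsTrueTwin G Gl Gr) (hS : G.Adm k S) :
    ∃ pl pr, IsTwinSplit pl pr k ∧ Gl.Adm pl (S ∩ Gl.verts) ∧ Gr.Adm pr (S ∩ Gr.verts) := by
  obtain ⟨hSV, hdom, X, hX, rfl, f, hf⟩ := hS
  have hcross := card_filter_and_comp_eq_of_involutive
    (fun v hv => ⟨(hf v hv).1, (hf v hv).2.2⟩) (· ∈ Gl.verts) (· ∈ Gr.verts)
  have hXcard := h.card_eq_add ((hX.trans inter_subset_left).trans hSV)
  exact ⟨_, _, ⟨_, le_add_self, hcross ▸ le_add_self, by omega⟩,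
    h.adm_inter_left hSV hdom hX hf, h.symm.adm_inter_left hSV hdom hX hf⟩

theorem dominatesOutsideTS_union {Dl Dr : Finset α} (h : IsTrueTwin G Gl Gr)
    (hl : Gl.DominatesOutsideTS Dl) (hr : Gr.DominatesOutsideTS Dr) :
    G.DominatesOutsideTS (Dl ∪ Dr) := by
  intro v hv hvTS
  rw [h.2.2.2, mem_union, not_or] at hvTS
  rcases mem_union.1 (h.2.1 ▸ hv) with hv | hv
  · rcases hl v hv hvTS.1 with hvD | ⟨u, hu, huv⟩
    · exact Or.inl (mem_union_left _ hvD)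
    · exact Or.inr ⟨u, mem_union_left _ hu, h.adj_of_left huv⟩
  · rcases hr v hv hvTS.2 with hvD | ⟨u, hu, huv⟩
    · exact Or.inl (mem_union_right _ hvD)
    · exact Or.inr ⟨u, mem_union_right _ hu, h.symm.adj_of_left huv⟩

theorem exists_isPM_union {Dl Dr Xl Xr Cl Cr : Finset α} {fl fr : α → α}
    (h : IsTrueTwin G Gl Gr) (hDl : Dl ⊆ Gl.verts) (hDr : Dr ⊆ Gr.verts)
    (hXl : Xl ⊆ Dl ∩ Gl.TS) (hXr : Xr ⊆ Dr ∩ Gr.TS) (hCl : Cl ⊆ Xl) (hCr : Cr ⊆ Xr)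
    (hC : Cl.card = Cr.card) (hfl : Gl.IsPM (Dl \ Xl) fl) (hfr : Gr.IsPM (Dr \ Xr) fr) :
    ∃ f, G.IsPM ((Dl ∪ Dr) \ (Xl \ Cl ∪ Xr \ Cr)) f := by
  have hD : Disjoint Dl Dr := h.1.mono hDl hDr
  have hXlD : Xl ⊆ Dl := hXl.trans inter_subset_left
  have hXrD : Xr ⊆ Dr := hXr.trans inter_subset_left
  have hClD : Cl ⊆ Dl := hCl.trans hXlD
  have hCrD : Cr ⊆ Dr := hCr.trans hXrD
  obtain ⟨g, hg⟩ := exists_isPM_of_forall_adj (G := G) (hD.mono hClD hCrD) hC fun a ha b hb =>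
    h.adj_of_mem_TS (mem_inter.1 (hXl (hCl ha))).2 (mem_inter.1 (hXr (hCr hb))).2
  have hside := (hfl.mono fun _ _ => h.adj_of_left).piecewise
    (hfr.mono fun _ _ => h.symm.adj_of_left) (hD.mono sdiff_subset sdiff_subset)
  have hcross : Disjoint (Dl \ Xl ∪ Dr \ Xr) (Cl ∪ Cr) := by
    rw [disjoint_union_left, disjoint_union_right, disjoint_union_right]
    exact ⟨⟨disjoint_sdiff_self_left.mono_right hCl, (hD.mono sdiff_subset hCrD)⟩,
      ⟨(hD.mono hClD sdiff_subset).symm, disjoint_sdiff_self_left.mono_right hCr⟩⟩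
  have hset : (Dl ∪ Dr) \ (Xl \ Cl ∪ Xr \ Cr) = (Dl \ Xl ∪ Dr \ Xr) ∪ (Cl ∪ Cr) := by
    ext v
    have := @hCl v; have := @hCr v; have := @hXlD v; have := @hXrD v
    have : v ∈ Dl → v ∉ Dr := fun hv => disjoint_left.1 hD hv
    simp only [mem_sdiff, mem_union]
    tauto
  exact ⟨_, hset ▸ hside.piecewise hg hcross⟩

theorem adm_union {Dl Dr : Finset α} {pl pr : ℕ} (h : IsTrueTwin G Gl Gr) (hl : Gl.Adm pl Dl)
    (hr : Gr.Adm pr Dr) (hk : IsTwinSplit pl pr k) : G.Adm k (Dl ∪ Dr) := by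
  obtain ⟨hDl, hdl, Xl, hXl, rfl, fl, hfl⟩ := hl
  obtain ⟨hDr, hdr, Xr, hXr, rfl, fr, hfr⟩ := hr
  obtain ⟨c, hcl, hcr, hk⟩ := hk
  obtain ⟨Cl, hCl, hClc⟩ := exists_subset_card_eq hcl
  obtain ⟨Cr, hCr, hCrc⟩ := exists_subset_card_eq hcr
  have hXlG : Xl ⊆ (Dl ∪ Dr) ∩ G.TS :=
    h.2.2.2 ▸ hXl.trans (inter_subset_inter subset_union_left subset_union_left)
  have hXrG : Xr ⊆ (Dl ∪ Dr) ∩ G.TS :=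
    h.2.2.2 ▸ hXr.trans (inter_subset_inter subset_union_right subset_union_right)
  have hX : Disjoint (Xl \ Cl) (Xr \ Cr) :=
    h.1.mono (sdiff_subset.trans (hXl.trans inter_subset_left) |>.trans hDl)
      (sdiff_subset.trans (hXr.trans inter_subset_left) |>.trans hDr)
  refine ⟨h.2.1 ▸ union_subset_union hDl hDr, h.dominatesOutsideTS_union hdl hdr,
    Xl \ Cl ∪ Xr \ Cr, union_subset (sdiff_subset.trans hXlG) (sdiff_subset.trans hXrG), ?_,
    h.exists_isPM_union hDl hDr hXl hXr hCl hCr (hClc.trans hCrc.symm) hfl hfr⟩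
  rw [card_union_of_disjoint hX, card_sdiff_of_subset hCl, card_sdiff_of_subset hCr]
  omega

theorem exists_split_gamma_le (h : IsTrueTwin G Gl Gr) (hk : G.DkNonempty k) :
    ∃ pl pr, IsTwinSplit pl pr k ∧ pl ≤ Gl.TS.card ∧ pr ≤ Gr.TS.card ∧
      Gl.gamma pl + Gr.gamma pr ≤ G.gamma k := by
  obtain ⟨S, hS, hcard⟩ := hk.exists_adm_card_eq
  obtain ⟨pl, pr, hsplit, hSl, hSr⟩ := h.exists_adm_split hS
  refine ⟨pl, pr, hsplit, hSl.le_card_TS, hSr.le_card_TS, ?_⟩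
  calc Gl.gamma pl + Gr.gamma pr ≤ (S ∩ Gl.verts).card + (S ∩ Gr.verts).card :=
        add_le_add (gamma_le_card_s11 hSl) (gamma_le_card_s11 hSr)
    _ = G.gamma k := by rw [← h.card_eq_add hS.1, hcard]

theorem gamma_le_add {pl pr : ℕ} (h : IsTrueTwin G Gl Gr) (hl : Gl.DkNonempty pl)
    (hr : Gr.DkNonempty pr) (hk : IsTwinSplit pl pr k) :
    G.gamma k ≤ Gl.gamma pl + Gr.gamma pr := by
  obtain ⟨Dl, hDl, hDlc⟩ := hl.exists_adm_card_eq
  obtain ⟨Dr, hDr, hDrc⟩ := hr.exists_adm_card_eq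
  calc G.gamma k ≤ (Dl ∪ Dr).card := gamma_le_card_s11 (h.adm_union hDl hDr hk)
    _ ≤ Dl.card + Dr.card := card_union_le _ _
    _ = Gl.gamma pl + Gr.gamma pr := by rw [hDlc, hDrc]

theorem minVal_eq_add (h : IsTrueTwin G Gl Gr) (hG : G.AllDkNonempty) (hGl : Gl.AllDkNonempty)
    (hGr : Gr.AllDkNonempty) : G.minVal = Gl.minVal + Gr.minVal := by
  obtain ⟨pl, hpl, hgl⟩ := Gl.minIndices_nonempty
  obtain ⟨pr, hpr, hgr⟩ := Gr.minIndices_nonempty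
  obtain ⟨k, hk, hgk⟩ := G.minIndices_nonempty
  obtain ⟨ql, qr, -, hql, hqr, hle⟩ := h.exists_split_gamma_le (hG k hk)
  have hsplit : IsTwinSplit pl pr (pl + pr - 2 * min pl pr) :=
    ⟨min pl pr, min_le_left _ _, min_le_right _ _, by omega⟩
  have hup := h.gamma_le_add (hGl pl hpl) (hGr pr hpr) hsplit
  have hmin := minVal_le_gamma (H := G) (k := pl + pr - 2 * min pl pr) (by rw [h.card_TS]; omega)
  have := minVal_le_gamma hql
  have := minVal_le_gamma hqr
  omega

theorem minIndices_subset_minSplits (h : IsTrueTwin G Gl Gr) (hG : G.AllDkNonempty)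
    (hGl : Gl.AllDkNonempty) (hGr : Gr.AllDkNonempty) : G.minIndices ⊆ minSplits Gl Gr := by
  rintro k ⟨hk, hgk⟩
  obtain ⟨pl, pr, hsplit, hpl, hpr, hle⟩ := h.exists_split_gamma_le (hG k hk)
  have := minVal_le_gamma hpl
  have := minVal_le_gamma hpr
  have := h.minVal_eq_add hG hGl hGr
  exact ⟨pl, ⟨hpl, by omega⟩, pr, ⟨hpr, by omega⟩, hsplit⟩

theorem gamma_eq_minVal_of_mem_minSplits (h : IsTrueTwin G Gl Gr) (hG : G.AllDkNonempty)
    (hGl : Gl.AllDkNonempty) (hGr : Gr.AllDkNonempty) (hk : k ≤ G.TS.card)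
    (hks : k ∈ minSplits Gl Gr) : G.gamma k = G.minVal := by
  obtain ⟨pl, ⟨hpl, hgl⟩, pr, ⟨hpr, hgr⟩, hsplit⟩ := hks
  have := h.gamma_le_add (hGl pl hpl) (hGr pr hpr) hsplit
  have := minVal_le_gamma hk
  have := h.minVal_eq_add hG hGl hGr
  omega

theorem betaVal_le_add (h : IsTrueTwin G Gl Gr) (hG : G.AllDkNonempty)
    (hGl : Gl.AllDkNonempty) (hGr : Gr.AllDkNonempty) :
    G.betaVal ≤ Gl.betaVal + Gr.betaVal := by
  obtain ⟨pl, hpl, pr, hpr, _, -, -, hsum⟩ :=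
    h.minIndices_subset_minSplits hG hGl hGr G.betaVal_mem_minIndices
  have := le_betaVal hpl
  have := le_betaVal hpr
  omega

end IsTrueTwin

end TSGraph

open TSGraph in
/-- For a true twin composition `G = Gl ⊗ Gr` with all `D_k`
families nonempty and Equation (2) holding for `Gl` and `Gr`:
`γ_{α(G)+2i}(G) = min(G)` for every `0 ≤ i ≤ (β(G) − α(G))/2`. -/
theorem stmt11 {α : Type*} [DecidableEq α] (G Gl Gr : TSGraph α)
    (hcomp : IsTrueTwin G Gl Gr)
    (hG : G.AllDkNonempty) (hGl : Gl.AllDkNonempty) (hGr : Gr.AllDkNonempty)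
    (hl : Gl.Eq2Holds) (hr : Gr.Eq2Holds) :
    ∀ i : ℕ, i ≤ (G.betaVal - G.alphaVal) / 2 →
      G.gamma (G.alphaVal + 2 * i) = G.minVal := by
  intro i hi
  have hαβ := le_betaVal G.alphaVal_mem_minIndices
  have hββ := hcomp.betaVal_le_add hG hGl hGr
  have hsplits : ∀ n, G.alphaVal + 2 * n ≤ G.betaVal → G.alphaVal + 2 * n ∈ minSplits Gl Gr := by
    intro n
    induction n with
    | zero => exact fun _ => hcomp.minIndices_subset_minSplits hG hGl hGr G.alphaVal_mem_minIndices
    | succ n ih =>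
      intro hn
      rw [mul_add, ← add_assoc]
      exact add_two_mem_minSplits hl hr (ih (by omega)) (by omega)
  have hβ := G.betaVal_mem_minIndices.1
  exact hcomp.gamma_eq_minVal_of_mem_minSplits hG hGl hGr (by omega) (hsplits i (by omega))
end
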